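/- Let θ: ℝ → ℂ be a C¹ function supported in [0, M] for some M > 1. For t ≠ 0 and x > 0 define J(t,x) = ∫_1^∞ (s-1)^{-1/2} θ(s) e^{i x² s/(4t)} ds. Then there is a constant C (depending on θ and M) such that |J(t,x)| ≤ C √|t| / x whenever x > √|t| > 0. -/

import Mathlib

/-!
Write `l = x² / (4t)`; the integral is `∫_{s > 1} (s - 1)^(-1/2) θ(s) e^{ils} ds`, and it is
`O(|l|^(-1/2))` for every `l ≠ 0`, where `|l|^(-1/2) = 2√|t| / x`. Split at
`s = 1 + 1/|l|`. Near the singularity the weight alone gives `2 ‖θ‖_∞ |l|^(-1/2)`. Beyond it, one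
integration by parts against `e^{ils}` gains a factor `1/|l|`, while the boundary term and the
derivative of `(s - 1)^(-1/2) θ(s)` cost at most `|l|^(1/2) (2 ‖θ‖_∞ + ‖θ'‖_1)`, since
`(s - 1)^(-1/2) ≤ |l|^(1/2)` there.
-/

open MeasureTheory

theorem HasCompactSupport.exists_forall_ge_eq_zero {E : Type*} [Zero E] {f : ℝ → E}
    (hf : HasCompactSupport f) : ∃ R, ∀ s ≥ R, f s = 0 := by
  obtain ⟨R, hR⟩ := hf.isCompact.bddAbove
  exact ⟨R + 1, fun s hs => image_eq_zero_of_notMem_tsupport fun h => by linarith [hR h]⟩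

theorem norm_intervalIntegral_mul_exp_mul_I_le {g g' : ℝ → ℂ} {a b l : ℝ} (hab : a ≤ b)
    (hl : l ≠ 0) (hg : ∀ s ∈ Set.Icc a b, HasDerivAt g (g' s) s)
    (hg' : IntervalIntegrable g' volume a b) :
    ‖∫ s in a..b, g s * Complex.exp (l * s * Complex.I)‖ ≤
      (‖g a‖ + ‖g b‖ + ∫ s in a..b, ‖g' s‖) / |l| := by
  set v : ℝ → ℂ := fun s => Complex.exp (l * s * Complex.I) / (l * Complex.I)
  have hlI : (l : ℂ) * Complex.I ≠ 0 := mul_ne_zero (by exact_mod_cast hl) Complex.I_ne_zero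
  have hv : ∀ s : ℝ, HasDerivAt v (Complex.exp (l * s * Complex.I)) s := by
    intro s
    have h := ((hasDerivAt_id (s : ℂ)).const_mul (l : ℂ)).mul_const Complex.I
    simpa [mul_div_assoc, div_self hlI] using h.cexp.comp_ofReal.div_const ((l : ℂ) * Complex.I)
  have hv_norm : ∀ s, ‖v s‖ = |l|⁻¹ := fun s => by
    rw [norm_div, show (l : ℂ) * s * Complex.I = ((l * s : ℝ) : ℂ) * Complex.I by push_cast; ring,
      Complex.norm_exp_ofReal_mul_I, norm_mul, Complex.norm_I, Complex.norm_real, Real.norm_eq_abs,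
      mul_one, one_div]
  have he : Continuous fun s : ℝ => Complex.exp (l * s * Complex.I) := by fun_prop
  rw [intervalIntegral.integral_mul_deriv_eq_deriv_mul
    (fun s hs => hg s (by rwa [Set.uIcc_of_le hab] at hs)) (fun s _ => hv s) hg'
    (he.intervalIntegrable _ _)]
  have h_rem : ‖∫ s in a..b, g' s * v s‖ ≤ (∫ s in a..b, ‖g' s‖) * |l|⁻¹ := by
    refine (intervalIntegral.norm_integral_le_integral_norm hab).trans_eq ?_
    simp only [norm_mul, hv_norm, intervalIntegral.integral_mul_const]
  calc ‖g b * v b - g a * v a - ∫ s in a..b, g' s * v s‖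
      ≤ ‖g b * v b‖ + ‖g a * v a‖ + ‖∫ s in a..b, g' s * v s‖ :=
        (norm_sub_le _ _).trans (by gcongr; exact norm_sub_le _ _)
    _ ≤ ‖g b‖ * |l|⁻¹ + ‖g a‖ * |l|⁻¹ + (∫ s in a..b, ‖g' s‖) * |l|⁻¹ := by
        rw [norm_mul, norm_mul, hv_norm, hv_norm]; gcongr
    _ = (‖g a‖ + ‖g b‖ + ∫ s in a..b, ‖g' s‖) / |l| := by ring

theorem rpow_neg_half_eq_inv_sqrt {x : ℝ} (hx : 0 ≤ x) : x ^ (-(1:ℝ)/2) = (√x)⁻¹ := by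
  rw [neg_div, Real.rpow_neg hx, Real.sqrt_eq_rpow]

theorem continuousOn_sub_rpow (c p : ℝ) : ContinuousOn (fun s => (s - c) ^ p) (Set.Ioi c) :=
  fun _ hs => ((continuousAt_id.sub continuousAt_const).rpow_const
    (Or.inl (sub_ne_zero.mpr (ne_of_gt hs)))).continuousWithinAt

theorem intervalIntegrable_sub_rpow_neg_half (c b : ℝ) :
    IntervalIntegrable (fun s => (s - c) ^ (-(1:ℝ)/2)) volume c b := by
  simpa using (intervalIntegral.intervalIntegrable_rpow' (a := 0) (b := b - c)
    (r := -(1:ℝ)/2) (by norm_num)).comp_sub_right c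

theorem integral_sub_rpow_neg_half (c δ : ℝ) :
    ∫ s in c..c + δ, (s - c) ^ (-(1:ℝ)/2) = 2 * √δ := by
  rw [intervalIntegral.integral_comp_sub_right (fun s => s ^ (-(1:ℝ)/2)), sub_self,
    add_sub_cancel_left, integral_rpow (Or.inl (by norm_num)), Real.zero_rpow (by norm_num),
    Real.sqrt_eq_rpow]
  norm_num
  ring

theorem integral_sub_rpow_neg_three_halves_le {c δ b : ℝ} (hδ : 0 < δ) (hb : c + δ ≤ b) :
    ∫ s in c + δ..b, (s - c) ^ (-(1:ℝ)/2 - 1) ≤ 2 * (√δ)⁻¹ := by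
  have h0 : (0 : ℝ) ∉ Set.uIcc δ (b - c) := Set.notMem_uIcc_of_lt hδ (by linarith)
  rw [intervalIntegral.integral_comp_sub_right (fun s => s ^ (-(1:ℝ)/2 - 1)),
    add_sub_cancel_left, integral_rpow (Or.inr ⟨by norm_num, h0⟩),
    show -(1:ℝ)/2 - 1 + 1 = -(1:ℝ)/2 by ring, rpow_neg_half_eq_inv_sqrt hδ.le,
    rpow_neg_half_eq_inv_sqrt (by linarith)]
  have : 0 ≤ (√(b - c))⁻¹ := by positivity
  linarith

theorem intervalIntegrable_sub_rpow_neg_half_mul {f : ℝ → ℂ} (hf : Continuous f) (c b : ℝ) :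
    IntervalIntegrable (fun s => ((s - c) ^ (-(1:ℝ)/2) : ℝ) * f s) volume c b := by
  have hw : IntervalIntegrable (fun s => (((s - c) ^ (-(1:ℝ)/2) : ℝ) : ℂ)) volume c b :=
    ⟨(intervalIntegrable_sub_rpow_neg_half c b).1.ofReal,
      (intervalIntegrable_sub_rpow_neg_half c b).2.ofReal⟩
  exact hw.mul_continuousOn hf.continuousOn

theorem norm_integral_sub_rpow_neg_half_mul_le {f : ℝ → ℂ} {K : ℝ} (hK : ∀ s, ‖f s‖ ≤ K)
    (c : ℝ) {δ : ℝ} (hδ : 0 ≤ δ) :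
    ‖∫ s in c..c + δ, ((s - c) ^ (-(1:ℝ)/2) : ℝ) * f s‖ ≤ 2 * K * √δ := by
  have hbound : ∀ s ∈ Set.Ioc c (c + δ), ‖((s - c) ^ (-(1:ℝ)/2) : ℝ) * f s‖ ≤
      K * (s - c) ^ (-(1:ℝ)/2) := fun s hs => by
    have hw : 0 ≤ (s - c) ^ (-(1:ℝ)/2) := Real.rpow_nonneg (by linarith [hs.1]) _
    rw [norm_mul, Complex.norm_real, Real.norm_of_nonneg hw, mul_comm]
    exact mul_le_mul_of_nonneg_right (hK s) hw
  calc _ ≤ ∫ s in c..c + δ, K * (s - c) ^ (-(1:ℝ)/2) :=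
        intervalIntegral.norm_integral_le_of_norm_le (by linarith) (ae_of_all _ hbound)
          ((intervalIntegrable_sub_rpow_neg_half c _).const_mul K)
    _ = 2 * K * √δ := by rw [intervalIntegral.integral_const_mul, integral_sub_rpow_neg_half]; ring

theorem hasDerivAt_sub_rpow_neg_half_mul {θ : ℝ → ℂ} {c s : ℝ} (hs : c < s)
    (hθ : DifferentiableAt ℝ θ s) :
    HasDerivAt (fun y => ((y - c) ^ (-(1:ℝ)/2) : ℝ) * θ y : ℝ → ℂ)
      ((-(1:ℝ)/2 * (s - c) ^ (-(1:ℝ)/2 - 1) : ℝ) * θ s +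
        ((s - c) ^ (-(1:ℝ)/2) : ℝ) * deriv θ s) s := by
  have hw : HasDerivAt (fun y => (y - c) ^ (-(1:ℝ)/2))
      (-(1:ℝ)/2 * (s - c) ^ (-(1:ℝ)/2 - 1)) s := by
    simpa using ((hasDerivAt_id s).sub_const c).rpow_const (p := -(1:ℝ)/2)
      (Or.inl (sub_ne_zero.mpr hs.ne'))
  exact hw.ofReal_comp.mul hθ.hasDerivAt

theorem norm_deriv_sub_rpow_neg_half_mul_le {θ : ℝ → ℂ} {K : ℝ} (hK : ∀ s, ‖θ s‖ ≤ K)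
    {c δ s : ℝ} (hδ : 0 < δ) (hs : c + δ ≤ s) :
    ‖((-(1:ℝ)/2 * (s - c) ^ (-(1:ℝ)/2 - 1) : ℝ) * θ s +
      ((s - c) ^ (-(1:ℝ)/2) : ℝ) * deriv θ s : ℂ)‖ ≤
      K / 2 * (s - c) ^ (-(1:ℝ)/2 - 1) + (√δ)⁻¹ * ‖deriv θ s‖ := by
  have hsc : δ ≤ s - c := by linarith
  have hw₁ : 0 ≤ (s - c) ^ (-(1:ℝ)/2 - 1) := Real.rpow_nonneg (by linarith) _
  have hw₂ : (s - c) ^ (-(1:ℝ)/2) ≤ (√δ)⁻¹ := by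
    rw [← rpow_neg_half_eq_inv_sqrt hδ.le]
    exact Real.rpow_le_rpow_of_nonpos hδ hsc (by norm_num)
  refine (norm_add_le _ _).trans (add_le_add ?_ ?_) <;>
    simp only [norm_mul, Complex.norm_real, Real.norm_eq_abs]
  · rw [abs_of_nonneg hw₁, show |(-1 : ℝ) / 2| = 1 / 2 by norm_num]
    nlinarith [hK s]
  · rw [abs_of_nonneg (Real.rpow_nonneg (by linarith) _)]
    exact mul_le_mul_of_nonneg_right hw₂ (norm_nonneg _)

theorem integral_norm_deriv_sub_rpow_neg_half_mul_le {θ : ℝ → ℂ} (hθ : ContDiff ℝ 1 θ)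
    (hθc : HasCompactSupport θ) {K : ℝ} (hK : ∀ s, ‖θ s‖ ≤ K) {c δ b : ℝ} (hδ : 0 < δ)
    (hb : c + δ ≤ b) :
    ∫ s in c + δ..b, ‖((-(1:ℝ)/2 * (s - c) ^ (-(1:ℝ)/2 - 1) : ℝ) * θ s +
      ((s - c) ^ (-(1:ℝ)/2) : ℝ) * deriv θ s : ℂ)‖ ≤ (K + ∫ s, ‖deriv θ s‖) * (√δ)⁻¹ := by
  have hθ' : Continuous (deriv θ) := hθ.continuous_deriv le_rfl
  have hsub : Set.uIcc (c + δ) b ⊆ Set.Ioi c := by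
    rw [Set.uIcc_of_le hb]; exact fun s hs => by simp only [Set.mem_Ioi]; linarith [hs.1]
  have hcont₁ := (continuousOn_sub_rpow c (-(1:ℝ)/2 - 1)).mono hsub
  have hcont₂ := (continuousOn_sub_rpow c (-(1:ℝ)/2)).mono hsub
  have hθcont := hθ.continuous
  have hI : ∫ s in c + δ..b, ‖deriv θ s‖ ≤ ∫ s, ‖deriv θ s‖ := by
    rw [intervalIntegral.integral_of_le hb]
    exact setIntegral_le_integral (hθ'.integrable_of_hasCompactSupport hθc.deriv).norm
      (ae_of_all _ fun _ => norm_nonneg _)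
  calc _ ≤ ∫ s in c + δ..b, (K / 2 * (s - c) ^ (-(1:ℝ)/2 - 1) + (√δ)⁻¹ * ‖deriv θ s‖) :=
        intervalIntegral.integral_mono_on hb (ContinuousOn.intervalIntegrable (by fun_prop))
          (ContinuousOn.intervalIntegrable (by fun_prop))
          fun s hs => norm_deriv_sub_rpow_neg_half_mul_le hK hδ hs.1
    _ = K / 2 * (∫ s in c + δ..b, (s - c) ^ (-(1:ℝ)/2 - 1)) +
          (√δ)⁻¹ * ∫ s in c + δ..b, ‖deriv θ s‖ := by
        rw [intervalIntegral.integral_add (ContinuousOn.intervalIntegrable (by fun_prop))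
          (ContinuousOn.intervalIntegrable (by fun_prop)), intervalIntegral.integral_const_mul,
          intervalIntegral.integral_const_mul]
    _ ≤ K / 2 * (2 * (√δ)⁻¹) + (√δ)⁻¹ * ∫ s, ‖deriv θ s‖ := by
        have hK0 : 0 ≤ K := (norm_nonneg _).trans (hK 0)
        gcongr
        exact integral_sub_rpow_neg_three_halves_le hδ hb
    _ = (K + ∫ s, ‖deriv θ s‖) * (√δ)⁻¹ := by ring

theorem norm_integral_sub_rpow_neg_half_mul_exp_le_of_eq_zero {θ : ℝ → ℂ}
    (hθ : ContDiff ℝ 1 θ) (hθc : HasCompactSupport θ) {K : ℝ} (hK : ∀ s, ‖θ s‖ ≤ K)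
    {c δ b l : ℝ} (hδ : 0 < δ) (hb : c + δ ≤ b) (hθb : θ b = 0) (hl : l ≠ 0) :
    ‖∫ s in c + δ..b, ((s - c) ^ (-(1:ℝ)/2) : ℝ) * θ s * Complex.exp (l * s * Complex.I)‖ ≤
      (2 * K + ∫ s, ‖deriv θ s‖) * (√δ)⁻¹ / |l| := by
  have hsub : Set.uIcc (c + δ) b ⊆ Set.Ioi c := by
    rw [Set.uIcc_of_le hb]; exact fun s hs => by simp only [Set.mem_Ioi]; linarith [hs.1]
  have hcont₁ := (continuousOn_sub_rpow c (-(1:ℝ)/2 - 1)).mono hsub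
  have hcont₂ := (continuousOn_sub_rpow c (-(1:ℝ)/2)).mono hsub
  have hθcont := hθ.continuous
  have hθ' : Continuous (deriv θ) := hθ.continuous_deriv le_rfl
  refine (norm_intervalIntegral_mul_exp_mul_I_le hb hl
    (fun s hs => hasDerivAt_sub_rpow_neg_half_mul (by linarith [hs.1])
      (hθ.differentiable one_ne_zero s))
    (ContinuousOn.intervalIntegrable (by fun_prop))).trans ?_
  have hstart : ‖(((c + δ - c) ^ (-(1:ℝ)/2) : ℝ) : ℂ) * θ (c + δ)‖ ≤ K * (√δ)⁻¹ := by
    rw [norm_mul, Complex.norm_real, add_sub_cancel_left, rpow_neg_half_eq_inv_sqrt hδ.le,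
      Real.norm_of_nonneg (by positivity), mul_comm]
    exact mul_le_mul_of_nonneg_right (hK _) (by positivity)
  rw [hθb, mul_zero, norm_zero, add_zero]
  gcongr
  calc _ ≤ K * (√δ)⁻¹ + (K + ∫ s, ‖deriv θ s‖) * (√δ)⁻¹ :=
        add_le_add hstart (integral_norm_deriv_sub_rpow_neg_half_mul_le hθ hθc hK hδ hb)
    _ = _ := by ring

theorem norm_integral_Ioi_sub_rpow_neg_half_mul_exp_le {θ : ℝ → ℂ} (hθ : ContDiff ℝ 1 θ)
    (hθc : HasCompactSupport θ) {K : ℝ} (hK : ∀ s, ‖θ s‖ ≤ K) (c : ℝ) {l : ℝ} (hl : l ≠ 0) :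
    ‖∫ s in Set.Ioi c, ((s - c) ^ (-(1:ℝ)/2) : ℝ) * θ s * Complex.exp (l * s * Complex.I)‖ ≤
      (4 * K + ∫ s, ‖deriv θ s‖) / √|l| := by
  set F : ℝ → ℂ := fun s => ((s - c) ^ (-(1:ℝ)/2) : ℝ) * θ s * Complex.exp (l * s * Complex.I)
  set δ := |l|⁻¹
  have hδ : 0 < δ := by positivity
  obtain ⟨R, hR⟩ := hθc.exists_forall_ge_eq_zero
  set b := max (c + δ) R
  have hab : c + δ ≤ b := le_max_left _ _
  have hF : IntervalIntegrable F volume c b :=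
    (intervalIntegrable_sub_rpow_neg_half_mul hθ.continuous c b).mul_continuousOn
      (by fun_prop : Continuous fun s : ℝ => Complex.exp (l * s * Complex.I)).continuousOn
  have hsplit : ∫ s in Set.Ioi c, F s = (∫ s in c..c + δ, F s) + ∫ s in c + δ..b, F s := by
    have hmem : c + δ ∈ Set.uIcc c b := Set.mem_uIcc_of_le (by linarith) hab
    rw [intervalIntegral.integral_add_adjacent_intervals
        (hF.mono_set (Set.uIcc_subset_uIcc_left hmem))
        (hF.mono_set (Set.uIcc_subset_uIcc_right hmem)),
      intervalIntegral.integral_of_le (by linarith),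
      setIntegral_eq_of_subset_of_forall_sdiff_eq_zero measurableSet_Ioi Set.Ioc_subset_Ioi_self]
    intro s hs
    have hbs : b < s := lt_of_not_ge fun h => hs.2 ⟨hs.1, h⟩
    simp only [F, hR s (le_of_lt (lt_of_le_of_lt (le_max_right _ _) hbs)), mul_zero, zero_mul]
  have hnear : ‖∫ s in c..c + δ, F s‖ ≤ 2 * K * √δ := by
    have h := norm_integral_sub_rpow_neg_half_mul_le
      (f := fun s => θ s * Complex.exp (l * s * Complex.I)) (K := K) (fun s => ?_) c hδ.le
    · simpa only [F, mul_assoc] using h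
    rw [norm_mul, show (l : ℂ) * s * Complex.I = ((l * s : ℝ) : ℂ) * Complex.I by push_cast; ring,
      Complex.norm_exp_ofReal_mul_I, mul_one]
    exact hK s
  have hfar := norm_integral_sub_rpow_neg_half_mul_exp_le_of_eq_zero hθ hθc hK hδ hab
    (hR b (le_max_right _ _)) hl
  have hsqrt : √δ = (√|l|)⁻¹ := Real.sqrt_inv _
  have hl_sq : |l| = √|l| ^ 2 := (Real.sq_sqrt (abs_nonneg l)).symm
  have hr : 0 < √|l| := Real.sqrt_pos.mpr (abs_pos.mpr hl)
  set r := √|l|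
  rw [hsplit]
  refine (norm_add_le _ _).trans ((add_le_add hnear hfar).trans_eq ?_)
  rw [hsqrt, inv_inv, hl_sq]
  field_simp
  ring

theorem oscillatory_integral_sqrt_bound_general
    (M : ℝ) (θ : ℝ → ℂ) (hθ : ContDiff ℝ 1 θ)
    (hsupp : Function.support θ ⊆ Set.Icc 0 M) :
    ∃ C > 0, ∀ t x : ℝ, t ≠ 0 → Real.sqrt |t| < x →
      ‖∫ s in Set.Ioi (1:ℝ),
          (((s - 1) ^ (-(1:ℝ)/2) : ℝ) : ℂ) * θ s *
            Complex.exp (Complex.I * (x : ℂ) ^ 2 * (s : ℂ) / (4 * (t : ℂ)))‖ ≤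
        C * Real.sqrt |t| / x := by
  have hθc : HasCompactSupport θ := .of_support_subset_isCompact isCompact_Icc hsupp
  obtain ⟨K, hK⟩ := hθc.exists_bound_of_continuous hθ.continuous
  set A := 4 * K + ∫ s, ‖deriv θ s‖
  have hA : 0 ≤ A := add_nonneg (by linarith [(norm_nonneg _).trans (hK 0)])
    (integral_nonneg fun _ => norm_nonneg _)
  refine ⟨2 * A + 1, by positivity, fun t x ht hx => ?_⟩
  have hx0 : 0 < x := (Real.sqrt_nonneg _).trans_lt hx
  set l := x ^ 2 / (4 * t)
  have hl : l ≠ 0 := div_ne_zero (by positivity) (by simpa using ht)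
  have hexp : ∀ s : ℝ, Complex.I * (x : ℂ) ^ 2 * (s : ℂ) / (4 * (t : ℂ)) = l * s * Complex.I :=
    fun s => by
      have : (t : ℂ) ≠ 0 := by exact_mod_cast ht
      simp only [l]; push_cast; field_simp
  have hsqrt : √|l| * (2 * √|t|) = x := by
    refine (pow_left_inj₀ (by positivity) hx0.le two_ne_zero).mp ?_
    have ht' : 0 < |t| := abs_pos.mpr ht
    rw [mul_pow, mul_pow, Real.sq_sqrt (abs_nonneg _), Real.sq_sqrt ht'.le, abs_div, abs_mul,
      abs_of_nonneg (sq_nonneg x), abs_of_pos four_pos]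
    field_simp
    norm_num
  simp only [hexp]
  calc _ ≤ A / √|l| := norm_integral_Ioi_sub_rpow_neg_half_mul_exp_le hθ hθc hK 1 hl
    _ = 2 * A * √|t| / x := by rw [← hsqrt]; field_simp
    _ ≤ (2 * A + 1) * √|t| / x := by gcongr; linarith

/-- Oscillatory integral bound: for `θ ∈ C¹` supported in `[0,M]`,
`J(t,x) = ∫_1^∞ (s-1)^{-1/2} θ(s) e^{ix²s/(4t)} ds` satisfies
`|J(t,x)| ≤ C √|t|/x` whenever `x > √|t| > 0`. -/
theorem oscillatory_integral_sqrt_bound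
    (M : ℝ) (hM : 1 < M) (θ : ℝ → ℂ) (hθ : ContDiff ℝ 1 θ)
    (hsupp : Function.support θ ⊆ Set.Icc 0 M) :
    ∃ C > 0, ∀ t x : ℝ, t ≠ 0 → Real.sqrt |t| < x →
      ‖∫ s in Set.Ioi (1:ℝ),
          (((s - 1) ^ (-(1:ℝ)/2) : ℝ) : ℂ) * θ s *
            Complex.exp (Complex.I * (x : ℂ) ^ 2 * (s : ℂ) / (4 * (t : ℂ)))‖ ≤
        C * Real.sqrt |t| / x :=
  oscillatory_integral_sqrt_bound_general M θ hθ hsupp
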